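/- arXiv:1304.2985 — 2 statements merged into one kernel-verified Lean document; each statement's English description precedes it below -/
import Mathlib

section
/- Let Γ_n : ℝ^d → ℝ be random convex functions and Γ : ℝ^d → ℝ a deterministic convex function with a unique minimizer β₀. If Γ_n(β) → Γ(β) in probability for every fixed β ∈ ℝ^d, then the (measurable selections of) minimizers β̂_n of Γ_n converge in probability to β₀. -/
/-!
Outside the ball of radius `ε` around `β₀`, a convex function with a minimizer there takes on the
sphere `‖β - β₀‖ = ε` a value no larger than at `β₀`; for `Γ` the sphere instead lies a margin
`h > 0` above `Γ β₀`. This margin survives for every convex `f` that is uniformly close to `Γ` on a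
fixed *finite* set: cover the sphere by a finite `tε`-net, and write each net point `v` near a sphere
point `y` as `(1 - t) y + t b` with `b` in a fixed polytope, so that convexity bounds `f v` by
`f y` and the values of `f` at the polytope's vertices. Hence the event that `β̂_n` is `ε`-far from
`β₀` is contained in finitely many events `|Γ_n(p) - Γ(p)| ≥ η`, each of vanishing probability.
-/

open MeasureTheory Filter Set Metric Topology

theorem exists_mem_Ioc_mul_lt (C : ℝ) {h : ℝ} (hh : 0 < h) : ∃ t ∈ Ioc (0 : ℝ) 1, t * C < h := by
  have hlim : Tendsto (fun t : ℝ => t * C) (𝓝[>] 0) (𝓝 0) :=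
    ((continuous_mul_const C).tendsto' 0 0 (zero_mul C)).mono_left nhdsWithin_le_nhds
  have hIoc : ∀ᶠ t in 𝓝[>] (0 : ℝ), t ∈ Ioc 0 1 := Ioc_mem_nhdsGT one_pos
  exact (hIoc.and (hlim.eventually (gt_mem_nhds hh))).exists

section Convex

variable {E : Type*} [NormedAddCommGroup E] [NormedSpace ℝ E]

theorem ConvexOn.exists_mem_sphere_le_of_le {f : E → ℝ} (hf : ConvexOn ℝ univ f) {x c : E}
    (hx : f x ≤ f c) {ε : ℝ} (hε : 0 < ε) (hεx : ε ≤ dist x c) :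
    ∃ y ∈ sphere c ε, f y ≤ f c := by
  have hd : 0 < dist x c := hε.trans_le hεx
  refine ⟨AffineMap.lineMap c x (ε / dist x c), ?_, ?_⟩
  · rw [mem_sphere, dist_lineMap_left, Real.norm_of_nonneg (by positivity), dist_comm c x,
      div_mul_cancel₀ _ hd.ne']
  · have hseg := lineMap_mem_segment ℝ c x ⟨by positivity, (div_le_one hd).2 hεx⟩
    exact (hf.le_max_of_mem_segment trivial trivial hseg).trans (max_le le_rfl hx)

theorem exists_mem_closedBall_lineMap_eq {c y v : E} {r t : ℝ} (ht : 0 < t)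
    (hy : dist y c ≤ r) (hv : dist v y ≤ t * r) :
    ∃ b ∈ closedBall c (2 * r), AffineMap.lineMap y b t = v := by
  refine ⟨AffineMap.lineMap y v t⁻¹, ?_, by simp [mul_inv_cancel₀ ht.ne']⟩
  have hb : dist (AffineMap.lineMap y v t⁻¹) y ≤ r := by
    rw [dist_lineMap_left, Real.norm_of_nonneg (inv_nonneg.2 ht.le), dist_comm,
      inv_mul_le_iff₀ ht]
    exact hv
  rw [mem_closedBall]
  linarith [dist_triangle (AffineMap.lineMap y v t⁻¹) y c]

variable [FiniteDimensional ℝ E]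

theorem exists_finset_forall_sphere_lt {g : E → ℝ} {c : E} {ε a : ℝ} (hε : 0 < ε)
    (hca : g c < a) (hga : ∀ y ∈ sphere c ε, a ≤ g y) :
    ∃ P : Finset E, ∃ η > 0, ∀ f : E → ℝ, ConvexOn ℝ univ f →
      (∀ p ∈ P, |f p - g p| < η) → ∀ y ∈ sphere c ε, f c < f y := by
  classical
  obtain ⟨V, hV, -⟩ :=
    (convex_closedBall c (2 * ε)).exists_subset_interior_convexHull_finset_of_isCompact
      (isCompact_closedBall c (2 * ε)) (univ_mem' fun _ => trivial)
  obtain ⟨M, hM⟩ := (V.finite_toSet.image g).bddAbove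
  obtain ⟨t, ⟨ht0, ht1⟩, htM⟩ := exists_mem_Ioc_mul_lt (M - g c) (half_pos (sub_pos.2 hca))
  obtain ⟨N, hNS, hN⟩ := (isCompact_sphere c ε).elim_nhds_subcover (fun y => ball y (t * ε))
    fun y _ => ball_mem_nhds y (mul_pos ht0 hε)
  refine ⟨insert c (N ∪ V), (a - g c) / 4, by linarith, fun f hf hclose y hy => ?_⟩
  have hfg : ∀ p ∈ N ∪ V, |f p - g p| < (a - g c) / 4 := fun p hp =>
    hclose p (Finset.mem_insert_of_mem hp)
  obtain ⟨v, hvN, hyv⟩ := mem_iUnion₂.1 (hN hy)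
  obtain ⟨b, hb, hbv⟩ := exists_mem_closedBall_lineMap_eq ht0 (mem_sphere.1 hy).le
    (by rw [dist_comm]; exact (mem_ball.1 hyv).le)
  obtain ⟨w, hwV, hbw⟩ := hf.exists_ge_of_mem_convexHull (subset_univ _)
    (interior_subset (hV hb))
  have hfb : f b ≤ M + (a - g c) / 4 := by
    have := abs_lt.1 (hfg w (Finset.mem_union_right _ hwV))
    linarith [hM (mem_image_of_mem g hwV)]
  have hfv : f v ≤ (1 - t) * f y + t * f b := by
    rw [← hbv, AffineMap.lineMap_apply_module]
    exact hf.2 trivial trivial (by linarith) ht0.le (by ring)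
  have hgv := abs_lt.1 (hfg _ (Finset.mem_union_left _ hvN))
  have hgc := abs_lt.1 (hclose c (Finset.mem_insert_self _ _))
  have hav := hga v (hNS v hvN)
  -- `a - η < f v ≤ (1 - t) f y + t (M + η)`, and the choices `η = (a - g c) / 4`,
  -- `t (M - g c) < (a - g c) / 2` leave no room for `f y ≤ f c`.
  by_contra! hyc
  have hyc' : f y ≤ g c + (a - g c) / 4 := by linarith
  linarith [mul_le_mul_of_nonneg_left hyc' (sub_nonneg.2 ht1),
    mul_le_mul_of_nonneg_left hfb ht0.le]

theorem ConvexOn.exists_finset_forall_isMinOn_dist_lt {g : E → ℝ} (hg : ConvexOn ℝ univ g)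
    {c : E} (hmin : IsMinOn g univ c) (huniq : ∀ x, IsMinOn g univ x → x = c) {ε : ℝ}
    (hε : 0 < ε) :
    ∃ P : Finset E, ∃ η > 0, ∀ f : E → ℝ, ConvexOn ℝ univ f →
      (∀ p ∈ P, |f p - g p| < η) → ∀ x, IsMinOn f univ x → dist x c < ε := by
  have hlt : ∀ y ∈ sphere c ε, g c < g y := by
    refine fun y hy => (isMinOn_univ_iff.1 hmin y).lt_of_ne fun hcy => ?_
    have hyc : y = c := huniq y fun z _ => hcy ▸ isMinOn_univ_iff.1 hmin z
    simp [hyc, hε.ne] at hy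
  obtain ⟨a, hca, hga⟩ := (isCompact_sphere c ε).exists_forall_le'
    ((hg.continuousOn isOpen_univ).mono (subset_univ _)) hlt
  obtain ⟨P, η, hη, hP⟩ := exists_finset_forall_sphere_lt hε hca hga
  refine ⟨P, η, hη, fun f hf hfg x hx => not_le.1 fun hεx => ?_⟩
  obtain ⟨y, hy, hyc⟩ := hf.exists_mem_sphere_le_of_le (isMinOn_univ_iff.1 hx c) hε hεx
  exact (hP f hf hfg y hy).not_ge hyc

end Convex

theorem MeasureTheory.tendsto_measure_zero_of_subset_biUnion {Ω ι α : Type*}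
    [MeasurableSpace Ω] {μ : Measure Ω} {l : Filter α} {s : α → Set Ω} {P : Finset ι}
    {t : ι → α → Set Ω} (hst : ∀ n, s n ⊆ ⋃ i ∈ P, t i n)
    (ht : ∀ i ∈ P, Tendsto (fun n => μ (t i n)) l (𝓝 0)) :
    Tendsto (fun n => μ (s n)) l (𝓝 0) := by
  refine tendsto_of_tendsto_of_tendsto_of_le_of_le tendsto_const_nhds
    (by simpa using tendsto_finsetSum P ht) (fun _ => zero_le) fun n => ?_
  exact (measure_mono (hst n)).trans (measure_biUnion_finset_le P _)

theorem stmt_6_general {Ω : Type*} [MeasurableSpace Ω] (μ : Measure Ω)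
    (d : ℕ) (Γn : ℕ → Ω → (Fin d → ℝ) → ℝ) (Γ : (Fin d → ℝ) → ℝ)
    (β₀ : Fin d → ℝ)
    (hconv : ∀ n ω, ConvexOn ℝ Set.univ (Γn n ω))
    (hΓconv : ConvexOn ℝ Set.univ Γ)
    (hmin : IsMinOn Γ Set.univ β₀)
    (huniq : ∀ β, IsMinOn Γ Set.univ β → β = β₀)
    (hpt : ∀ β : Fin d → ℝ, ∀ ε > (0:ℝ),
      Tendsto (fun n => μ {ω | ε ≤ |Γn n ω β - Γ β|}) atTop (nhds 0))
    (βhat : ℕ → Ω → Fin d → ℝ)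
    (hargmin : ∀ n ω, IsMinOn (Γn n ω) Set.univ (βhat n ω)) :
    ∀ ε > (0:ℝ),
      Tendsto (fun n => μ {ω | ε ≤ dist (βhat n ω) β₀}) atTop (nhds 0) := by
  intro ε hε
  obtain ⟨P, η, hη, hP⟩ := hΓconv.exists_finset_forall_isMinOn_dist_lt hmin huniq hε
  refine tendsto_measure_zero_of_subset_biUnion (P := P) (fun n ω hω => ?_) fun p _ => hpt p η hη
  by_contra hω'
  have hclose : ∀ p ∈ P, |Γn n ω p - Γ p| < η := fun p hp =>
    not_le.1 fun hp' => hω' (mem_iUnion₂_of_mem hp hp')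
  exact (hP _ (hconv n ω) hclose _ (hargmin n ω)).not_ge hω

/-- if random convex functions `Γ_n` converge pointwise in probability to a
deterministic convex function `Γ` with unique minimizer `β₀`, then measurable selections
of minimizers of `Γ_n` converge in probability to `β₀`. -/
theorem stmt_6 {Ω : Type*} [MeasurableSpace Ω] (μ : Measure Ω) [IsProbabilityMeasure μ]
    (d : ℕ) (Γn : ℕ → Ω → (Fin d → ℝ) → ℝ) (Γ : (Fin d → ℝ) → ℝ)
    (β₀ : Fin d → ℝ)
    (hconv : ∀ n ω, ConvexOn ℝ Set.univ (Γn n ω))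
    (hΓconv : ConvexOn ℝ Set.univ Γ)
    (hmin : IsMinOn Γ Set.univ β₀)
    (huniq : ∀ β, IsMinOn Γ Set.univ β → β = β₀)
    (hpt : ∀ β : Fin d → ℝ, ∀ ε > (0:ℝ),
      Tendsto (fun n => μ {ω | ε ≤ |Γn n ω β - Γ β|}) atTop (nhds 0))
    (βhat : ℕ → Ω → Fin d → ℝ)
    (hmeas : ∀ n, Measurable (βhat n))
    (hargmin : ∀ n ω, IsMinOn (Γn n ω) Set.univ (βhat n ω)) :
    ∀ ε > (0:ℝ),
      Tendsto (fun n => μ {ω | ε ≤ dist (βhat n ω) β₀}) atTop (nhds 0) :=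
  stmt_6_general μ d Γn Γ β₀ hconv hΓconv hmin huniq hpt βhat hargmin
end

section
/- Let H be symmetric positive definite on ℝ^d, Z_n random vectors in ℝ^d with √n Z_n ⇒ ξ (a centered Gaussian), and P_n, P : ℝ^d → ℝ convex with P_n(u) → P(u) for all u and P_n, P nonnegative with P_n(0) = P(0) = 0. Then the minimizers û_n of u ↦ u^⊤ H u − 2√n Z_n^⊤ u + P_n(u) converge in distribution to the minimizer of u ↦ u^⊤ H u − 2 ξ^⊤ u + P(u), provided the latter is a.s. unique. -/
/-!
The minimizer `û_n` is a deterministic function of `√n Z_n`: `û_n = F_n (√n Z_n)`, where `F_n v`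
is the minimizer of `u ↦ uᵀHu − 2vᵀu + P_n u`, unique by strict convexity. Pointwise convergence
of nonnegative convex functions is locally uniform, because on a simplex they are bounded by
their values at the vertices and are then uniformly Lipschitz inside it. Hence the objectives
converge continuously, and since coercivity of `H` keeps the minimizers in a bounded set,
`F_n v_n → F v` whenever `v_n → v`. So `g ∘ F_n → g ∘ F` locally uniformly, and the tightness of
the weakly convergent laws of `√n Z_n` gives `E g(F_n(√n Z_n)) → E g(F ξ)`.
-/

open MeasureTheory Filter ProbabilityTheory Matrix
open Set Metric Topology
open scoped ENNReal BoundedContinuousFunction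

theorem IsCompact.tendsto_of_isMinOn {α X : Type*} [TopologicalSpace X] {K : Set X}
    (hK : IsCompact K) {l : Filter α} {f : α → X → ℝ} {g : X → ℝ} {w : α → X} {w₀ : X}
    (hfg : ∀ x, Tendsto (fun p : α × X => f p.1 p.2) (l ×ˢ 𝓝 x) (𝓝 (g x)))
    (hw : ∀ a, IsMinOn (f a) univ (w a)) (hwK : ∀ᶠ a in l, w a ∈ K)
    (huniq : ∀ z, IsMinOn g univ z → z = w₀) :
    Tendsto w l (𝓝 w₀) := by
  refine hK.tendsto_nhds_of_unique_mapClusterPt hwK fun z _ hz => huniq z fun u _ => ?_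
  -- pass to the limit in `f a (w a) ≤ f a u` along the nontrivial filter `l ⊓ comap w (𝓝 z)`
  have : (l ⊓ comap w (𝓝 z)).NeBot := by
    rw [← map_neBot_iff w, Filter.push_pull, inf_comm]
    exact hz
  have hwz : Tendsto (fun a => (a, w a)) (l ⊓ comap w (𝓝 z)) (l ×ˢ 𝓝 z) :=
    (tendsto_inf_left tendsto_id).prodMk (tendsto_inf_right tendsto_comap)
  exact le_of_tendsto_of_tendsto ((hfg z).comp hwz)
    ((hfg u).comp ((tendsto_inf_left tendsto_id).prodMk tendsto_const_nhds))
    (Eventually.of_forall fun a => hw a (mem_univ u))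

theorem tendstoLocallyUniformly_of_forall_tendsto {ι α β : Type*} [TopologicalSpace α]
    [UniformSpace β] {F : ι → α → β} {f : α → β} {p : Filter ι} (hf : Continuous f)
    (h : ∀ x, Tendsto (fun q : ι × α => F q.1 q.2) (p ×ˢ 𝓝 x) (𝓝 (f x))) :
    TendstoLocallyUniformly F f p :=
  tendstoLocallyUniformly_iff_forall_tendsto.2 fun x =>
    (((hf.tendsto x).comp tendsto_snd).prodMk_nhds (h x)).mono_right (nhds_le_uniformity (f x))

section
variable {α E : Type*} [NormedAddCommGroup E] [NormedSpace ℝ E] [FiniteDimensional ℝ E]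
  {l : Filter α} {f : α → E → ℝ} {g : E → ℝ}

theorem exists_ball_eventually_abs_le_of_convexOn (hf : ∀ a, ConvexOn ℝ univ (f a))
    (hfnn : ∀ a x, 0 ≤ f a x) (hfg : ∀ x, Tendsto (fun a => f a x) l (𝓝 (g x))) (x₀ : E) :
    ∃ r > 0, ∃ M, ∀ᶠ a in l, ∀ y ∈ ball x₀ r, |f a y| ≤ M := by
  obtain ⟨b, hx₀b, -⟩ := exists_mem_interior_convexHull_affineBasis (univ_mem (f := 𝓝 x₀))
  obtain ⟨r, hr, hball⟩ := Metric.isOpen_iff.1 isOpen_interior x₀ hx₀b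
  obtain ⟨M, hM⟩ := (Set.finite_range fun i => g (b i) + 1).bddAbove
  have hb : ∀ᶠ a in l, ∀ i, f a (b i) ≤ M := eventually_all.2 fun i =>
    ((hfg (b i)).eventually (gt_mem_nhds (lt_add_one _))).mono fun a ha =>
      ha.le.trans (hM ⟨i, rfl⟩)
  refine ⟨r, hr, M, hb.mono fun a ha y hy => ?_⟩
  obtain ⟨z, ⟨i, rfl⟩, hz⟩ :=
    (hf a).exists_ge_of_mem_convexHull (subset_univ _) (interior_subset (hball hy))
  exact abs_le.2 ⟨by linarith [hfnn a y, hfnn a (b i), ha i], hz.trans (ha i)⟩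

theorem tendsto_uncurry_of_convexOn (hf : ∀ a, ConvexOn ℝ univ (f a))
    (hfnn : ∀ a x, 0 ≤ f a x) (hfg : ∀ x, Tendsto (fun a => f a x) l (𝓝 (g x))) (x₀ : E) :
    Tendsto (fun p : α × E => f p.1 p.2) (l ×ˢ 𝓝 x₀) (𝓝 (g x₀)) := by
  obtain ⟨r, hr, M, hM⟩ := exists_ball_eventually_abs_le_of_convexOn hf hfnn hfg x₀
  set K : ℝ := ((2 * M / (r / 2)).toNNReal : ℝ)
  have hlip : ∀ᶠ a in l, ∀ y ∈ ball x₀ (r / 2), dist (f a y) (f a x₀) ≤ K * dist y x₀ := by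
    filter_upwards [hM] with a ha y hy
    have := ((hf a).subset (subset_univ _) (convex_ball x₀ r)).lipschitzOnWith_of_abs_le
      (half_pos hr) fun y hy => ha y hy
    rw [sub_half] at this
    exact this.dist_le_mul y hy x₀ (mem_ball_self (half_pos hr))
  rw [tendsto_iff_dist_tendsto_zero]
  refine squeeze_zero' (Eventually.of_forall fun _ => dist_nonneg)
    ((hlip.prod_mk (ball_mem_nhds x₀ (half_pos hr))).mono fun p hp =>
      (dist_triangle _ (f p.1 x₀) _).trans (add_le_add_left (hp.1 p.2 hp.2) _)) ?_
  simpa using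
    (((tendsto_snd (f := l) (g := 𝓝 x₀)).dist (tendsto_const_nhds (x := x₀))).const_mul K).add
    ((tendsto_iff_dist_tendsto_zero.1 (hfg x₀)).comp tendsto_fst)
end

section
variable {ι : Type*} [Fintype ι] {H : Matrix ι ι ℝ}

theorem abs_dotProduct_le (v u : ι → ℝ) : |v ⬝ᵥ u| ≤ Fintype.card ι * ‖v‖ * ‖u‖ := calc
  |v ⬝ᵥ u| ≤ ∑ i, |v i| * |u i| := by
    simpa only [dotProduct, abs_mul] using
      Finset.abs_sum_le_sum_abs (fun i => v i * u i) Finset.univ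
  _ ≤ ∑ _i : ι, ‖v‖ * ‖u‖ := Finset.sum_le_sum fun i _ =>
    mul_le_mul (norm_le_pi_norm v i) (norm_le_pi_norm u i) (abs_nonneg _) (norm_nonneg _)
  _ = Fintype.card ι * ‖v‖ * ‖u‖ := by simp [mul_assoc]

theorem Matrix.PosDef.exists_mul_sq_norm_le (hH : H.PosDef) :
    ∃ c > 0, ∀ u, c * ‖u‖ ^ 2 ≤ u ⬝ᵥ H *ᵥ u := by
  cases isEmpty_or_nonempty ι
  · exact ⟨1, one_pos, fun u => by simp [Subsingleton.elim u 0]⟩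
  have hq : Continuous fun u : ι → ℝ => u ⬝ᵥ H *ᵥ u := by fun_prop
  obtain ⟨w, hw, hmin⟩ := (isCompact_sphere (0 : ι → ℝ) 1).exists_isMinOn
    (NormedSpace.sphere_nonempty.2 zero_le_one) hq.continuousOn
  have hw0 : w ≠ 0 := ne_zero_of_mem_unit_sphere ⟨w, hw⟩
  refine ⟨w ⬝ᵥ H *ᵥ w, by simpa using hH.dotProduct_mulVec_pos hw0, fun u => ?_⟩
  rcases eq_or_ne u 0 with rfl | hu
  · simp
  have hnu : ‖u‖ ≠ 0 := norm_ne_zero_iff.2 hu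
  have := isMinOn_iff.1 hmin (‖u‖⁻¹ • u) (by simp [norm_smul, hnu])
  simp only [mulVec_smul, dotProduct_smul, smul_dotProduct, smul_eq_mul] at this
  calc w ⬝ᵥ H *ᵥ w * ‖u‖ ^ 2 ≤ ‖u‖⁻¹ * (‖u‖⁻¹ * (u ⬝ᵥ H *ᵥ u)) * ‖u‖ ^ 2 := by gcongr
    _ = u ⬝ᵥ H *ᵥ u := by field_simp

theorem Matrix.PosDef.strictConvexOn_dotProduct_mulVec (hH : H.PosDef) :
    StrictConvexOn ℝ univ fun u : ι → ℝ => u ⬝ᵥ H *ᵥ u := by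
  refine ⟨convex_univ, fun x _ y _ hxy a b ha hb hab => ?_⟩
  have hq := hH.dotProduct_mulVec_pos (sub_ne_zero.2 hxy)
  simp only [star_trivial, mulVec_sub, dotProduct_sub, sub_dotProduct] at hq
  simp only [mulVec_add, mulVec_smul, dotProduct_add, add_dotProduct, dotProduct_smul,
    smul_dotProduct, smul_eq_mul]
  obtain rfl : a = 1 - b := eq_sub_of_add_eq hab
  linear_combination mul_pos (mul_pos ha hb) hq

def quadObjective (H : Matrix ι ι ℝ) (P : (ι → ℝ) → ℝ) (v u : ι → ℝ) : ℝ :=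
  u ⬝ᵥ H *ᵥ u - 2 * (v ⬝ᵥ u) + P u

variable {P : (ι → ℝ) → ℝ}

theorem strictConvexOn_quadObjective (hH : H.PosDef) (hP : ConvexOn ℝ univ P) (v : ι → ℝ) :
    StrictConvexOn ℝ univ (quadObjective H P v) := by
  have hlin : ConvexOn ℝ univ fun u : ι → ℝ => -(2 * (v ⬝ᵥ u)) :=
    ⟨convex_univ, fun x _ y _ a b _ _ _ => le_of_eq <| by
      simp only [dotProduct_add, dotProduct_smul, smul_eq_mul]; ring⟩
  have hsplit : quadObjective H P v = (fun u => u ⬝ᵥ H *ᵥ u) + (fun u => -(2 * (v ⬝ᵥ u))) + P := by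
    funext u
    simp [quadObjective, sub_eq_add_neg]
  rw [hsplit]
  exact (hH.strictConvexOn_dotProduct_mulVec.add_convexOn hlin).add_convexOn hP

theorem norm_mul_sub_le_quadObjective {c : ℝ} (hc : ∀ u, c * ‖u‖ ^ 2 ≤ u ⬝ᵥ H *ᵥ u)
    (hP : ∀ u, 0 ≤ P u) (v u : ι → ℝ) :
    ‖u‖ * (c * ‖u‖ - 2 * Fintype.card ι * ‖v‖) ≤ quadObjective H P v u := by
  have := (le_abs_self _).trans (abs_dotProduct_le v u)
  have := hc u
  have := hP u
  unfold quadObjective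
  nlinarith

theorem exists_isMinOn_quadObjective (hH : H.PosDef) (hP : ConvexOn ℝ univ P)
    (hPnn : ∀ u, 0 ≤ P u) (v : ι → ℝ) : ∃ w, IsMinOn (quadObjective H P v) univ w := by
  obtain ⟨c, hc, hcq⟩ := hH.exists_mul_sq_norm_le
  have hPcont := continuousOn_univ.1 (hP.continuousOn isOpen_univ)
  have hcont : Continuous (quadObjective H P v) := by unfold quadObjective; fun_prop
  have hpoly : Tendsto (fun t : ℝ => t * (c * t - 2 * Fintype.card ι * ‖v‖)) atTop atTop :=
    tendsto_id.atTop_mul_atTop₀ (tendsto_atTop_add_const_right _ _ (tendsto_id.const_mul_atTop hc))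
  obtain ⟨w, hw⟩ := hcont.exists_forall_le <| tendsto_atTop_mono
    (norm_mul_sub_le_quadObjective hcq hPnn v) (hpoly.comp tendsto_norm_cocompact_atTop)
  exact ⟨w, isMinOn_univ_iff.2 hw⟩

/-- A minimizer exists and is unique when `H` is positive definite and `P` is convex and
nonnegative; otherwise the value is arbitrary. -/
noncomputable def quadArgmin (H : Matrix ι ι ℝ) (P : (ι → ℝ) → ℝ) (v : ι → ℝ) : ι → ℝ :=
  Classical.epsilon (IsMinOn (quadObjective H P v) univ)

theorem isMinOn_quadArgmin (hH : H.PosDef) (hP : ConvexOn ℝ univ P) (hPnn : ∀ u, 0 ≤ P u)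
    (v : ι → ℝ) : IsMinOn (quadObjective H P v) univ (quadArgmin H P v) :=
  Classical.epsilon_spec (exists_isMinOn_quadObjective hH hP hPnn v)

theorem eq_quadArgmin_of_isMinOn (hH : H.PosDef) (hP : ConvexOn ℝ univ P) (hPnn : ∀ u, 0 ≤ P u)
    {v w : ι → ℝ} (hw : IsMinOn (quadObjective H P v) univ w) : w = quadArgmin H P v :=
  (strictConvexOn_quadObjective hH hP v).eq_of_isMinOn hw (isMinOn_quadArgmin hH hP hPnn v)
    (mem_univ _) (mem_univ _)

theorem norm_quadArgmin_le (hH : H.PosDef) {c : ℝ} (hc : 0 < c)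
    (hcq : ∀ u, c * ‖u‖ ^ 2 ≤ u ⬝ᵥ H *ᵥ u) (hP : ConvexOn ℝ univ P) (hPnn : ∀ u, 0 ≤ P u)
    (hP0 : P 0 = 0) (v : ι → ℝ) :
    ‖quadArgmin H P v‖ ≤ 2 * Fintype.card ι * ‖v‖ / c := by
  set w := quadArgmin H P v
  have hlow := norm_mul_sub_le_quadObjective hcq hPnn v w
  have hmin : quadObjective H P v w ≤ 0 := by
    simpa [quadObjective, hP0] using isMinOn_univ_iff.1 (isMinOn_quadArgmin hH hP hPnn v) 0
  rw [le_div_iff₀ hc]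
  by_contra! h
  have hw : 0 < ‖w‖ := (norm_nonneg w).lt_of_ne fun h0 => by
    rw [← h0, zero_mul] at h
    linarith [show 0 ≤ 2 * (Fintype.card ι : ℝ) * ‖v‖ by positivity]
  nlinarith [mul_pos hw (sub_pos.2 h)]

theorem tendsto_quadArgmin {α : Type*} {l : Filter α} (hH : H.PosDef)
    {Q : α → (ι → ℝ) → ℝ} (hQ : ∀ a, ConvexOn ℝ univ (Q a)) (hQnn : ∀ a u, 0 ≤ Q a u)
    (hQ0 : ∀ a, Q a 0 = 0) (hP : ConvexOn ℝ univ P) (hPnn : ∀ u, 0 ≤ P u)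
    (hQP : ∀ x, Tendsto (fun p : α × (ι → ℝ) => Q p.1 p.2) (l ×ˢ 𝓝 x) (𝓝 (P x)))
    {v : α → ι → ℝ} {v₀ : ι → ℝ} (hv : Tendsto v l (𝓝 v₀)) :
    Tendsto (fun a => quadArgmin H (Q a) (v a)) l (𝓝 (quadArgmin H P v₀)) := by
  obtain ⟨c, hc, hcq⟩ := hH.exists_mul_sq_norm_le
  have hobj : ∀ x, Tendsto (fun p : α × (ι → ℝ) => quadObjective H (Q p.1) (v p.1) p.2)
      (l ×ˢ 𝓝 x) (𝓝 (quadObjective H P v₀ x)) := fun x => by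
    have hq : Continuous fun p : (ι → ℝ) × (ι → ℝ) => p.2 ⬝ᵥ H *ᵥ p.2 - 2 * (p.1 ⬝ᵥ p.2) := by
      fun_prop
    exact ((hq.tendsto (v₀, x)).comp ((hv.comp tendsto_fst).prodMk_nhds tendsto_snd)).add (hQP x)
  refine (isCompact_closedBall (0 : ι → ℝ) (2 * Fintype.card ι * (‖v₀‖ + 1) / c)).tendsto_of_isMinOn
    hobj (fun a => isMinOn_quadArgmin hH (hQ a) (hQnn a) (v a)) ?_
    fun z hz => eq_quadArgmin_of_isMinOn hH hP hPnn hz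
  filter_upwards [hv.norm.eventually (eventually_le_nhds (lt_add_one ‖v₀‖))] with a ha
  rw [mem_closedBall_zero_iff]
  exact (norm_quadArgmin_le hH hc hcq (hQ a) (hQnn a) (hQ0 a) (v a)).trans (by gcongr)

theorem continuous_quadArgmin (hH : H.PosDef) (hP : ConvexOn ℝ univ P) (hPnn : ∀ u, 0 ≤ P u)
    (hP0 : P 0 = 0) : Continuous (quadArgmin H P) :=
  continuous_iff_continuousAt.2 fun _ => tendsto_quadArgmin hH (fun _ => hP) (fun _ => hPnn)
    (fun _ => hP0) hP hPnn
    (fun x => ((continuousOn_univ.1 (hP.continuousOn isOpen_univ)).tendsto x).comp tendsto_snd)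
    tendsto_id

theorem tendsto_uncurry_quadArgmin {α : Type*} {l : Filter α} (hH : H.PosDef)
    {Q : α → (ι → ℝ) → ℝ} (hQ : ∀ a, ConvexOn ℝ univ (Q a)) (hQnn : ∀ a u, 0 ≤ Q a u)
    (hQ0 : ∀ a, Q a 0 = 0) (hP : ConvexOn ℝ univ P) (hPnn : ∀ u, 0 ≤ P u)
    (hQP : ∀ u, Tendsto (fun a => Q a u) l (𝓝 (P u))) (v₀ : ι → ℝ) :
    Tendsto (fun p : α × (ι → ℝ) => quadArgmin H (Q p.1) p.2) (l ×ˢ 𝓝 v₀)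
      (𝓝 (quadArgmin H P v₀)) :=
  tendsto_quadArgmin hH (Q := fun p : α × (ι → ℝ) => Q p.1) (fun p => hQ p.1)
    (fun p => hQnn p.1) (fun p => hQ0 p.1) hP hPnn
    (fun x => (tendsto_uncurry_of_convexOn hQ hQnn hQP x).comp
      ((tendsto_fst.comp tendsto_fst).prodMk tendsto_snd))
    tendsto_snd

end

section
variable {E ι : Type*} [NormedAddCommGroup E] [MeasurableSpace E] [BorelSpace E]
  {l : Filter ι} {ν : ι → ProbabilityMeasure E} {ν₀ : ProbabilityMeasure E}

theorem MeasureTheory.ProbabilityMeasure.exists_eventually_measure_compl_ball_lt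
    (hν : Tendsto ν l (𝓝 ν₀)) {ε : ℝ≥0∞} (hε : 0 < ε) :
    ∃ R : ℝ, ∀ᶠ i in l, (ν i : Measure E) (ball 0 R)ᶜ < ε := by
  have htail : Tendsto (fun R : ℝ => (ν₀ : Measure E) (ball 0 R)ᶜ) atTop (𝓝 0) := by
    have hempty : ⋂ R : ℝ, (ball (0 : E) R)ᶜ = ∅ :=
      eq_empty_iff_forall_notMem.2 fun x hx => mem_iInter.1 hx (‖x‖ + 1) (by simp)
    have := tendsto_measure_iInter_atTop (μ := (ν₀ : Measure E))
      (s := fun R : ℝ => (ball (0 : E) R)ᶜ) (fun R => measurableSet_ball.compl.nullMeasurableSet)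
      (fun R S hRS => compl_subset_compl.2 (ball_subset_ball hRS)) ⟨0, measure_ne_top _ _⟩
    rwa [hempty, measure_empty] at this
  obtain ⟨R, hR⟩ := (htail.eventually (gt_mem_nhds hε)).exists
  exact ⟨R, eventually_lt_of_limsup_lt ((ProbabilityMeasure.limsup_measure_closed_le_of_tendsto
    hν isOpen_ball.isClosed_compl).trans_lt hR)⟩

variable [ProperSpace E]

theorem MeasureTheory.ProbabilityMeasure.tendsto_integral_sub_of_tendstoLocallyUniformly
    (hν : Tendsto ν l (𝓝 ν₀)) {G : ι → E → ℝ} {G₀ : E → ℝ} (hGm : ∀ i, Measurable (G i))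
    (hG₀m : Measurable G₀) {C : ℝ} (hC : ∀ i x, |G i x - G₀ x| ≤ C)
    (hG : TendstoLocallyUniformly G G₀ l) :
    Tendsto (fun i => ∫ x, (G i x - G₀ x) ∂(ν i : Measure E)) l (𝓝 0) := by
  refine Metric.tendsto_nhds.2 fun ε hε => ?_
  set δ := ε / (2 * (|C| + 1))
  have hδ : 0 < δ := by positivity
  obtain ⟨R, hR⟩ := exists_eventually_measure_compl_ball_lt hν (ENNReal.ofReal_pos.2 hδ)
  have hunif := Metric.tendstoUniformlyOn_iff.1
    (tendstoLocallyUniformly_iff_forall_isCompact.1 hG _ (isCompact_closedBall (0 : E) R)) δ hδ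
  filter_upwards [hR, hunif] with i hRi hi
  set μ := (ν i : Measure E)
  have hint : Integrable (fun x => G i x - G₀ x) μ :=
    .of_bound ((hGm i).sub hG₀m).aestronglyMeasurable C (.of_forall (hC i))
  have htail := norm_integral_sub_setIntegral_le (.of_forall (hC i))
    (measurableSet_ball (x := 0) (ε := R)) hint
  have hcore : ‖∫ x in ball 0 R, (G i x - G₀ x) ∂μ‖ ≤ δ * μ.real (ball 0 R) :=
    norm_setIntegral_le_of_norm_le_const (measure_lt_top _ _) fun x hx => by
      simpa [Real.dist_eq, abs_sub_comm] using (hi x (ball_subset_closedBall hx)).le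
  have htail_le : μ.real (ball 0 R)ᶜ ≤ δ := ENNReal.toReal_le_of_le_ofReal hδ.le hRi.le
  have hball_le : μ.real (ball 0 R) ≤ 1 := measureReal_le_one
  rw [dist_zero_right]
  calc ‖∫ x, (G i x - G₀ x) ∂μ‖
      ≤ ‖∫ x, (G i x - G₀ x) ∂μ - ∫ x in ball 0 R, (G i x - G₀ x) ∂μ‖
        + ‖∫ x in ball 0 R, (G i x - G₀ x) ∂μ‖ := norm_le_norm_sub_add _ _
    _ ≤ δ * |C| + δ := by
      have := mul_le_mul_of_nonneg_left (le_abs_self C) (measureReal_nonneg (μ := μ) (s := (ball 0 R)ᶜ))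
      have := mul_le_mul_of_nonneg_right htail_le (abs_nonneg C)
      have := mul_le_of_le_one_right hδ.le hball_le
      linarith
    _ = ε / 2 := by
      simp only [δ]
      field_simp
    _ < ε := half_lt_self hε

theorem MeasureTheory.ProbabilityMeasure.tendsto_integral_of_tendstoLocallyUniformly
    (hν : Tendsto ν l (𝓝 ν₀)) {G : ι → E → ℝ} {G₀ : E →ᵇ ℝ} (hGm : ∀ i, Measurable (G i))
    {C : ℝ} (hC : ∀ i x, |G i x| ≤ C) (hG : TendstoLocallyUniformly G G₀ l) :
    Tendsto (fun i => ∫ x, G i x ∂(ν i : Measure E)) l (𝓝 (∫ x, G₀ x ∂(ν₀ : Measure E))) := by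
  have hsub := tendsto_integral_sub_of_tendstoLocallyUniformly hν hGm G₀.continuous.measurable
    (C := C + ‖G₀‖)
    (fun i x => (abs_sub _ _).trans (add_le_add (hC i x) (G₀.norm_coe_le_norm x))) hG
  have hint : ∀ i, Integrable (G i) (ν i : Measure E) := fun i =>
    .of_bound (hGm i).aestronglyMeasurable C (.of_forall (hC i))
  simpa using ((ProbabilityMeasure.tendsto_iff_forall_integral_tendsto.1 hν G₀).add hsub).congr
    fun i => by rw [integral_sub (hint i) (G₀.integrable _), add_sub_cancel]

theorem tendsto_integral_comp_of_tendstoLocallyUniformly {Ω : Type*} [MeasurableSpace Ω]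
    {μ : Measure Ω} [IsProbabilityMeasure μ] {X : ι → Ω → E} {Y : Ω → E}
    (hX : ∀ i, Measurable (X i)) (hY : Measurable Y)
    (hXY : ∀ f : E →ᵇ ℝ, Tendsto (fun i => ∫ ω, f (X i ω) ∂μ) l (𝓝 (∫ ω, f (Y ω) ∂μ)))
    {G : ι → E → ℝ} {G₀ : E →ᵇ ℝ} (hGm : ∀ i, Measurable (G i)) {C : ℝ}
    (hC : ∀ i x, |G i x| ≤ C) (hG : TendstoLocallyUniformly G G₀ l) :
    Tendsto (fun i => ∫ ω, G i (X i ω) ∂μ) l (𝓝 (∫ ω, G₀ (Y ω) ∂μ)) := by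
  have hlaw : Tendsto (fun i => ProbabilityMeasure.map ⟨μ, inferInstance⟩ (hX i).aemeasurable) l
      (𝓝 (ProbabilityMeasure.map ⟨μ, inferInstance⟩ hY.aemeasurable)) := by
    refine ProbabilityMeasure.tendsto_iff_forall_integral_tendsto.2 fun f => ?_
    change Tendsto (fun i => ∫ x, f x ∂(μ.map (X i))) l (𝓝 (∫ x, f x ∂(μ.map Y)))
    simpa only [integral_map (hX _).aemeasurable f.continuous.aestronglyMeasurable,
      integral_map hY.aemeasurable f.continuous.aestronglyMeasurable] using hXY f
  have := ProbabilityMeasure.tendsto_integral_of_tendstoLocallyUniformly hlaw hGm hC hG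
  change Tendsto (fun i => ∫ x, G i x ∂(μ.map (X i))) l (𝓝 (∫ x, G₀ x ∂(μ.map Y))) at this
  simpa only [integral_map (hX _).aemeasurable (hGm _).aestronglyMeasurable,
    integral_map hY.aemeasurable G₀.continuous.aestronglyMeasurable] using this
end

theorem stmt_19_general {Ωs : Type*} [MeasurableSpace Ωs] (μ : Measure Ωs) [IsProbabilityMeasure μ]
    (d : ℕ) (H : Matrix (Fin d) (Fin d) ℝ) (hHpd : H.PosDef)
    (Z : ℕ → Ωs → Fin d → ℝ) (hZmeas : ∀ n, Measurable (Z n))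
    (ξ : Ωs → Fin d → ℝ) (hξmeas : Measurable ξ)
    -- `√n Z_n ⇒ ξ`
    (hweak : ∀ g : BoundedContinuousFunction (Fin d → ℝ) ℝ,
      Tendsto (fun n : ℕ => ∫ ω, g (Real.sqrt n • Z n ω) ∂μ) atTop
        (nhds (∫ ω, g (ξ ω) ∂μ)))
    (Pn : ℕ → (Fin d → ℝ) → ℝ) (P : (Fin d → ℝ) → ℝ)
    (hPnconv : ∀ n, ConvexOn ℝ Set.univ (Pn n)) (hPconv : ConvexOn ℝ Set.univ P)
    (hPnnonneg : ∀ n u, 0 ≤ Pn n u) (hPnonneg : ∀ u, 0 ≤ P u)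
    (hPn0 : ∀ n, Pn n 0 = 0) (hP0 : P 0 = 0)
    (hPpt : ∀ u, Tendsto (fun n => Pn n u) atTop (nhds (P u)))
    (uhat : ℕ → Ωs → Fin d → ℝ)
    (hargmin : ∀ (n : ℕ) ω, IsMinOn
      (fun u => u ⬝ᵥ H.mulVec u - 2 * Real.sqrt n * (Z n ω ⬝ᵥ u) + Pn n u)
      Set.univ (uhat n ω))
    (ustar : Ωs → Fin d → ℝ)
    (hstar : ∀ᵐ ω ∂μ,
      IsMinOn (fun u => u ⬝ᵥ H.mulVec u - 2 * (ξ ω ⬝ᵥ u) + P u) Set.univ (ustar ω) ∧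
      ∀ u, IsMinOn (fun u' => u' ⬝ᵥ H.mulVec u' - 2 * (ξ ω ⬝ᵥ u') + P u') Set.univ u →
        u = ustar ω) :
    ∀ g : BoundedContinuousFunction (Fin d → ℝ) ℝ,
      Tendsto (fun n : ℕ => ∫ ω, g (uhat n ω) ∂μ) atTop (nhds (∫ ω, g (ustar ω) ∂μ)) := by
  intro g
  set X : ℕ → Ωs → Fin d → ℝ := fun n ω => Real.sqrt n • Z n ω
  have hX : ∀ n, Measurable (X n) := fun n => (hZmeas n).const_smul (Real.sqrt n)
  have huhat : ∀ n ω, uhat n ω = quadArgmin H (Pn n) (X n ω) := fun n ω =>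
    eq_quadArgmin_of_isMinOn hHpd (hPnconv n) (hPnnonneg n) <| by
      convert hargmin n ω using 2 with u
      simp [quadObjective, X, smul_dotProduct, mul_assoc]
  have hustar : ∀ᵐ ω ∂μ, ustar ω = quadArgmin H P (ξ ω) :=
    hstar.mono fun ω h => eq_quadArgmin_of_isMinOn hHpd hPconv hPnonneg h.1
  have hF := continuous_quadArgmin hHpd hPconv hPnonneg hP0
  have hloc : TendstoLocallyUniformly (fun n => g ∘ quadArgmin H (Pn n))
      (g.compContinuous ⟨_, hF⟩) atTop :=
    tendstoLocallyUniformly_of_forall_tendsto (g.compContinuous ⟨_, hF⟩).continuous fun v =>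
      (g.continuous.tendsto _).comp <|
        tendsto_uncurry_quadArgmin hHpd hPnconv hPnnonneg hPn0 hPconv hPnonneg hPpt v
  simp_rw [huhat, integral_congr_ae (hustar.mono fun ω h => congrArg g h)]
  exact tendsto_integral_comp_of_tendstoLocallyUniformly hX hξmeas hweak
    (fun n => g.continuous.measurable.comp
      (continuous_quadArgmin hHpd (hPnconv n) (hPnnonneg n) (hPn0 n)).measurable)
    (fun n x => g.norm_coe_le_norm _) hloc

/-- composite argmin continuous-mapping result. With `H` symmetric positive
definite, `√n Z_n ⇒ ξ` (a centered Gaussian vector), and deterministic convex penalties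
`P_n → P` pointwise with `P_n, P ≥ 0`, `P_n(0) = P(0) = 0`, the minimizers `û_n` of
`u ↦ uᵀHu − 2√n Z_nᵀu + P_n(u)` converge in distribution to the (a.s. unique) minimizer
`u*` of `u ↦ uᵀHu − 2ξᵀu + P(u)`. -/
theorem stmt_19 {Ωs : Type*} [MeasurableSpace Ωs] (μ : Measure Ωs) [IsProbabilityMeasure μ]
    (d : ℕ) (H : Matrix (Fin d) (Fin d) ℝ) (hHsymm : H.IsSymm) (hHpd : H.PosDef)
    (Z : ℕ → Ωs → Fin d → ℝ) (hZmeas : ∀ n, Measurable (Z n))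
    (ξ : Ωs → Fin d → ℝ) (hξmeas : Measurable ξ)
    -- ξ is a centered Gaussian vector
    (hξcent : ∀ j, ∫ ω, ξ ω j ∂μ = 0)
    (hξgauss : ∀ l : Fin d → ℝ, ∃ σ : NNReal,
      μ.map (fun ω => l ⬝ᵥ ξ ω) = gaussianReal 0 σ)
    -- `√n Z_n ⇒ ξ`
    (hweak : ∀ g : BoundedContinuousFunction (Fin d → ℝ) ℝ,
      Tendsto (fun n : ℕ => ∫ ω, g (Real.sqrt n • Z n ω) ∂μ) atTop
        (nhds (∫ ω, g (ξ ω) ∂μ)))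
    (Pn : ℕ → (Fin d → ℝ) → ℝ) (P : (Fin d → ℝ) → ℝ)
    (hPnconv : ∀ n, ConvexOn ℝ Set.univ (Pn n)) (hPconv : ConvexOn ℝ Set.univ P)
    (hPnnonneg : ∀ n u, 0 ≤ Pn n u) (hPnonneg : ∀ u, 0 ≤ P u)
    (hPn0 : ∀ n, Pn n 0 = 0) (hP0 : P 0 = 0)
    (hPpt : ∀ u, Tendsto (fun n => Pn n u) atTop (nhds (P u)))
    (uhat : ℕ → Ωs → Fin d → ℝ) (huhatmeas : ∀ n, Measurable (uhat n))
    (hargmin : ∀ (n : ℕ) ω, IsMinOn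
      (fun u => u ⬝ᵥ H.mulVec u - 2 * Real.sqrt n * (Z n ω ⬝ᵥ u) + Pn n u)
      Set.univ (uhat n ω))
    (ustar : Ωs → Fin d → ℝ) (hustarmeas : Measurable ustar)
    (hstar : ∀ᵐ ω ∂μ,
      IsMinOn (fun u => u ⬝ᵥ H.mulVec u - 2 * (ξ ω ⬝ᵥ u) + P u) Set.univ (ustar ω) ∧
      ∀ u, IsMinOn (fun u' => u' ⬝ᵥ H.mulVec u' - 2 * (ξ ω ⬝ᵥ u') + P u') Set.univ u →
        u = ustar ω) :
    ∀ g : BoundedContinuousFunction (Fin d → ℝ) ℝ,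
      Tendsto (fun n : ℕ => ∫ ω, g (uhat n ω) ∂μ) atTop (nhds (∫ ω, g (ustar ω) ∂μ)) :=
  stmt_19_general μ d H hHpd Z hZmeas ξ hξmeas hweak Pn P hPnconv hPconv hPnnonneg hPnonneg hPn0 hP0
    hPpt uhat hargmin ustar hstar
end
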